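/- arXiv:2111.09755 — 3 statements merged into one kernel-verified Lean document; each statement's English description precedes it below -/
import Mathlib

section
/- Let f ∈ C_c²(ℝⁿ), and for each x ∈ ℝⁿ and r > 0 with 4δ < |∇f(x)| for some δ ∈ (0,1), define S(x,r) := { z ∈ B(x,r) : |f(z) − f(x)| ≥ (1/8)|∇f(x)|·|z−x| }. Then for each δ ∈ (0,1) there exists r_δ ∈ (0,δ) such that for all x with |∇f(x)| > 4δ and all r ∈ (0, r_δ], the Lebesgue measure of S(x,r) is at least c₀·|B(x,r)| for a positive constant c₀ depending only on n. -/
open Metric MeasureTheory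
open scoped RealInnerProductSpace

set_option maxHeartbeats 1000000 in

/-- For `f ∈ C_c²(ℝⁿ)` and `S(x,r) := {z ∈ B(x,r) :
|f(z) − f(x)| ≥ (1/8)|∇f(x)||z−x|}`, there is `c₀ > 0` depending only on `n` such that
for every `δ ∈ (0,1)` there is `r_δ ∈ (0,δ)` with `|S(x,r)| ≥ c₀ |B(x,r)|` whenever
`|∇f(x)| > 4δ` and `r ∈ (0, r_δ]`. -/
theorem measure_lower_bound_S {n : ℕ} :
    ∃ c₀ : ℝ, 0 < c₀ ∧ ∀ f : EuclideanSpace ℝ (Fin n) → ℝ,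
      ContDiff ℝ 2 f → HasCompactSupport f →
      ∀ δ ∈ Set.Ioo (0 : ℝ) 1, ∃ rδ ∈ Set.Ioo (0 : ℝ) δ,
        ∀ x : EuclideanSpace ℝ (Fin n), 4 * δ < ‖fderiv ℝ f x‖ →
          ∀ r ∈ Set.Ioc (0 : ℝ) rδ,
            ENNReal.ofReal c₀ * volume (ball x r) ≤
              volume {z ∈ ball x r | (1/8) * ‖fderiv ℝ f x‖ * dist z x ≤ |f z - f x|} := by
  refine ⟨(8:ℝ)⁻¹ ^ n, by positivity, fun f hf hsupp δ hδ => ?_⟩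
  -- bound on the second derivative
  have hf1 : ContDiff ℝ 1 (fderiv ℝ f) := hf.fderiv_right (by norm_num)
  obtain ⟨C, hC⟩ : ∃ C, ∀ x, ‖fderiv ℝ (fderiv ℝ f) x‖ ≤ C := by
    have hK : HasCompactSupport (fderiv ℝ (fderiv ℝ f)) := (hsupp.fderiv ℝ).fderiv ℝ
    obtain ⟨C0, hC0⟩ := hK.isCompact.exists_bound_of_continuousOn
      (hf1.continuous_fderiv one_ne_zero).continuousOn
    refine ⟨max C0 0, fun x => ?_⟩
    by_cases hx : x ∈ tsupport (fderiv ℝ (fderiv ℝ f))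
    · exact le_trans (hC0 x hx) (le_max_left _ _)
    · rw [image_eq_zero_of_notMem_tsupport hx, ContinuousLinearMap.opNorm_zero]
      exact le_max_right _ _
  have hC0 : 0 ≤ C := le_trans (ContinuousLinearMap.opNorm_nonneg _) (hC 0)
  -- Lipschitz bound on fderiv f
  have hLip : ∀ a b : EuclideanSpace ℝ (Fin n), ‖fderiv ℝ f b - fderiv ℝ f a‖ ≤ C * ‖b - a‖ := by
    intro a b
    have := convex_univ.norm_image_sub_le_of_norm_fderiv_le
      (f := fderiv ℝ f) (C := C)
      (fun y _ => (hf1.differentiable one_ne_zero).differentiableAt)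
      (fun y _ => hC y) (Set.mem_univ a) (Set.mem_univ b)
    simpa using this
  refine ⟨δ / (2 * (C + 1)), ⟨div_pos hδ.1 (by nlinarith), ?_⟩, ?_⟩
  · rw [div_lt_iff₀ (by positivity)]
    nlinarith [hδ.1]
  intro x hx r hr
  set L := fderiv ℝ f x with hL
  have hδ0 : 0 < δ := hδ.1
  have hr0 : 0 < r := hr.1
  have hCr : C * r ≤ δ / 2 := by
    have h1 : r ≤ δ / (2 * (C + 1)) := hr.2
    rw [le_div_iff₀ (by positivity)] at h1
    nlinarith
  have hLpos : 0 < ‖L‖ := lt_trans (by positivity) hx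
  -- the dual vector
  set v := (InnerProductSpace.toDual ℝ (EuclideanSpace ℝ (Fin n))).symm L with hv
  have hvL : ∀ w, ⟪v, w⟫ = L w := fun w => InnerProductSpace.toDual_symm_apply
  have hvn : ‖v‖ = ‖L‖ := LinearIsometryEquiv.norm_map _ _
  have hvpos : 0 < ‖v‖ := hvn ▸ hLpos
  set y₀ : EuclideanSpace ℝ (Fin n) := x + (r / (2 * ‖v‖)) • v with hy₀
  have hy₀x : ‖y₀ - x‖ = r / 2 := by
    rw [hy₀]
    rw [add_sub_cancel_left, norm_smul, Real.norm_eq_abs,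
      abs_of_nonneg (by positivity)]
    field_simp
  -- Taylor bound on closedBall x r
  have taylor : ∀ z ∈ closedBall x r, ‖f z - f x - L (z - x)‖ ≤ C * r * ‖z - x‖ := by
    intro z hz
    refine (convex_closedBall x r).norm_image_sub_le_of_norm_fderiv_le'
      (fun y _ => (hf.differentiable (by norm_num)).differentiableAt)
      (fun y hy => ?_) (mem_closedBall_self hr0.le) hz
    have := hLip x y
    have hyx : ‖y - x‖ ≤ r := by rwa [mem_closedBall, dist_eq_norm] at hy
    calc ‖fderiv ℝ f y - L‖ ≤ C * ‖y - x‖ := this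
      _ ≤ C * r := by nlinarith
  -- the small ball is inside S
  have hsub : ball y₀ (r / 8) ⊆
      {z ∈ ball x r | (1/8) * ‖L‖ * dist z x ≤ |f z - f x|} := by
    intro z hz
    have hzy : ‖z - y₀‖ < r / 8 := by rwa [mem_ball, dist_eq_norm] at hz
    have hzx : ‖z - x‖ ≤ 5 * r / 8 := by
      have : z - x = (z - y₀) + (y₀ - x) := by abel
      rw [this]
      calc ‖(z - y₀) + (y₀ - x)‖ ≤ ‖z - y₀‖ + ‖y₀ - x‖ := norm_add_le _ _
        _ ≤ 5 * r / 8 := by rw [hy₀x]; linarith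
    have hzball : z ∈ ball x r := by
      rw [mem_ball, dist_eq_norm]; linarith
    -- inner product lower bound
    have hinner : (3 * r / 8) * ‖v‖ ≤ ⟪v, z - x⟫ := by
      have hsplit : (z : EuclideanSpace ℝ (Fin n)) - x = (z - y₀) + (r / (2 * ‖v‖)) • v := by
        rw [hy₀]; abel
      rw [hsplit, inner_add_right, real_inner_smul_right, real_inner_self_eq_norm_sq]
      have h1 : |⟪v, z - y₀⟫| ≤ ‖v‖ * (r / 8) := by
        calc |⟪v, z - y₀⟫| ≤ ‖v‖ * ‖z - y₀‖ := abs_real_inner_le_norm _ _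
          _ ≤ ‖v‖ * (r / 8) := by nlinarith
      have h2 : r / (2 * ‖v‖) * ‖v‖ ^ 2 = (r / 2) * ‖v‖ := by
        field_simp
      rw [h2]
      have := abs_le.1 h1
      nlinarith
    have hLzx : (3 * r / 8) * ‖L‖ ≤ L (z - x) := by
      rw [← hvL, ← hvn]; exact hinner
    have htay := taylor z (ball_subset_closedBall hzball)
    have habs := abs_le.1 (by rwa [Real.norm_eq_abs] at htay)
    have hfz : (1/8) * ‖L‖ * ‖z - x‖ ≤ f z - f x := by
      have hCrz : C * r * ‖z - x‖ ≤ (δ / 2) * ‖z - x‖ := by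
        nlinarith [norm_nonneg (z - x)]
      have hδL : δ / 2 ≤ ‖L‖ / 8 := by nlinarith
      nlinarith [norm_nonneg (z - x), habs.1]
    refine ⟨hzball, ?_⟩
    rw [dist_eq_norm]
    calc (1/8) * ‖L‖ * ‖z - x‖ ≤ f z - f x := hfz
      _ ≤ |f z - f x| := le_abs_self _
  -- measure computation
  calc ENNReal.ofReal ((8:ℝ)⁻¹ ^ n) * volume (ball x r)
      = volume (ball y₀ (r / 8)) := by
        rw [Measure.addHaar_ball_of_pos volume x hr0, Measure.addHaar_ball_of_pos volume y₀ (by positivity : (0:ℝ) < r / 8),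
          ← mul_assoc, ← ENNReal.ofReal_mul (by positivity), finrank_euclideanSpace_fin]
        congr 2
        rw [div_pow]
        ring
        rw [one_div]
    _ ≤ _ := measure_mono hsub
end

section
/- Let (X, ρ, μ) be a metric measure space of homogeneous type (μ doubling, 0 < μ(B) < ∞ for all balls B, and μ({x}) = 0 for all x) and f ∈ C_c*(X). For each δ ∈ (0,1) there exists r_δ ∈ (0,δ) and a constant c₀ > 0 depending only on the doubling constant of μ such that for any x ∈ X with Lip f(x) > 4δ and any r ∈ (0, r_δ], the set S(x,r) := { z ∈ B(x,r) : |f(z)−f(x)| ≥ (1/8)·Lip f(x)·ρ(z,x) } satisfies μ(S(x,r)) ≥ c₀·μ(B(x,r)). -/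
open Metric MeasureTheory Filter

/-- `sup_{y ∈ B(x,r)} |f(x) − f(y)| / r`. -/
noncomputable def supRatio {X : Type*} [MetricSpace X] (f : X → ℝ) (x : X) (r : ℝ) : ℝ :=
  sSup ((fun y => |f x - f y|) '' ball x r) / r

/-- The pointwise upper Lipschitz constant `Lip f(x)`. -/
noncomputable def lipUpper {X : Type*} [MetricSpace X] (f : X → ℝ) (x : X) : ℝ :=
  limsup (supRatio f x) (nhdsWithin 0 (Set.Ioi 0))

/-- The pointwise lower Lipschitz constant `lip f(x)`. -/
noncomputable def lipLower {X : Type*} [MetricSpace X] (f : X → ℝ) (x : X) : ℝ :=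
  liminf (supRatio f x) (nhdsWithin 0 (Set.Ioi 0))

/-- `f ∈ C_c*(X)`: a compactly supported Lipschitz function such that
`Lip f = lip f` is continuous with compact support, and
`Lip f(x) = lim_{r→0} sup_{y∈B(x,r)} |f(x)−f(y)|/r` converges uniformly in `x`. -/
def MemCcStar {X : Type*} [MetricSpace X] (f : X → ℝ) : Prop :=
  (∃ K : NNReal, LipschitzWith K f) ∧ HasCompactSupport f ∧
  (∀ x, lipLower f x = lipUpper f x) ∧
  Continuous (lipUpper f) ∧ HasCompactSupport (lipUpper f) ∧
  (∀ ε : ℝ, 0 < ε → ∃ δ : ℝ, 0 < δ ∧ ∀ r : ℝ, 0 < r → r < δ →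
    ∀ x, |supRatio f x r - lipUpper f x| < ε)

/-- In a metric measure space of homogeneous type, for `f ∈ C_c*(X)`
and each `δ ∈ (0,1)` there exist `r_δ ∈ (0,δ)` and `c₀ > 0` such that
`μ(S(x,r)) ≥ c₀ μ(B(x,r))` whenever `Lip f(x) > 4δ` and `r ∈ (0, r_δ]`, where
`S(x,r) = {z ∈ B(x,r) : |f(z)−f(x)| ≥ (1/8) Lip f(x) ρ(z,x)}`. -/
theorem measure_lower_bound_S_homogeneous {X : Type*} [MetricSpace X] [MeasurableSpace X]
    [BorelSpace X] (μ : Measure X) (L : ℝ) (hL : 1 ≤ L)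
    (hdouble : ∀ (x : X) (r : ℝ), 0 < r →
      μ (ball x (2 * r)) ≤ ENNReal.ofReal L * μ (ball x r))
    (hpos : ∀ (x : X) (r : ℝ), 0 < r → 0 < μ (ball x r))
    (hfin : ∀ (x : X) (r : ℝ), 0 < r → μ (ball x r) < ⊤)
    (hpt : ∀ x : X, μ {x} = 0)
    (f : X → ℝ) (hf : MemCcStar f) :
    ∃ c₀ : ℝ, 0 < c₀ ∧ ∀ δ ∈ Set.Ioo (0 : ℝ) 1, ∃ rδ ∈ Set.Ioo (0 : ℝ) δ,
      ∀ x : X, 4 * δ < lipUpper f x → ∀ r ∈ Set.Ioc (0 : ℝ) rδ,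
        ENNReal.ofReal c₀ * μ (ball x r) ≤
          μ {z ∈ ball x r | (1/8) * lipUpper f x * dist z x ≤ |f z - f x|} := by
  obtain ⟨⟨K, hK⟩, _hsupp, _heq, hcont, hcs, hunif⟩ := hf
  have hL0 : (0:ℝ) < L := lt_of_lt_of_le one_pos hL
  refine ⟨(1/L)^4, by positivity, ?_⟩
  rintro δ ⟨hδ0, hδ1⟩
  obtain ⟨δ₁, hδ₁0, hδ₁⟩ := hunif δ hδ0
  have huc : UniformContinuous (lipUpper f) := hcs.uniformContinuous_of_continuous hcont
  rw [Metric.uniformContinuous_iff] at huc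
  obtain ⟨δ₂, hδ₂0, hδ₂⟩ := huc δ hδ0
  refine ⟨min (δ/2) (min (δ₁/2) δ₂), ⟨by positivity, ?_⟩, ?_⟩
  · exact lt_of_le_of_lt (min_le_left _ _) (by linarith)
  rintro x hx r ⟨hr0, hrδ⟩
  set M := lipUpper f x with hM
  have hM0 : 0 < M := lt_trans (by positivity) hx
  have hrδ1 : r ≤ δ₁/2 := hrδ.trans ((min_le_right _ _).trans (min_le_left _ _))
  have hrδ2 : r ≤ δ₂ := hrδ.trans ((min_le_right _ _).trans (min_le_right _ _))
  -- find y ∈ B(x, r/2) with |f x - f y| > (M - δ) * (r/2)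
  have hsr : |supRatio f x (r/2) - M| < δ := hδ₁ (r/2) (by linarith) (by linarith) x
  have hsSup : (M - δ) * (r/2) < sSup ((fun y => |f x - f y|) '' ball x (r/2)) := by
    have h1 : M - δ < supRatio f x (r/2) := by
      have := abs_lt.1 hsr; linarith [this.1]
    rw [supRatio, lt_div_iff₀ (by linarith : (0:ℝ) < r/2)] at h1
    exact h1
  obtain ⟨a, ⟨y, hy, hay⟩, ha⟩ : ∃ a ∈ ((fun y => |f x - f y|) '' ball x (r/2)),
      (M - δ) * (r/2) < a := by
    by_contra h
    push_neg at h
    have hne : ((fun y => |f x - f y|) '' ball x (r/2)).Nonempty :=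
      ⟨_, Set.mem_image_of_mem _ (mem_ball_self (by linarith))⟩
    exact absurd (csSup_le hne h) (not_le.2 hsSup)
  rw [← hay] at ha
  have hyx : dist y x < r/2 := mem_ball.1 hy
  -- the key inclusion : ball y (r/8) ⊆ S(x,r)
  have hincl : ball y (r/8) ⊆
      {z ∈ ball x r | (1/8) * lipUpper f x * dist z x ≤ |f z - f x|} := by
    intro z hz
    have hzy : dist z y < r/8 := mem_ball.1 hz
    have hzx : dist z x < r := by
      calc dist z x ≤ dist z y + dist y x := dist_triangle _ _ _
        _ < r/8 + r/2 := by linarith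
        _ ≤ r := by linarith
    refine ⟨mem_ball.2 hzx, ?_⟩
    by_contra hbad
    push_neg at hbad
    have hfz : |f z - f x| < (1/8) * M * r := by
      calc |f z - f x| < (1/8) * M * dist z x := hbad
        _ ≤ (1/8) * M * r := by nlinarith [dist_nonneg (x := z) (y := x)]
    -- lower bound on |f y - f z|
    have hlow : (M - δ) * (r/2) - (1/8) * M * r < |f y - f z| := by
      have h1 : |f x - f y| ≤ |f y - f z| + |f z - f x| := by
        have := abs_sub_abs_le_abs_sub (f x - f y) (f x - f z)
        calc |f x - f y| ≤ |f x - f z| + |(f x - f z) - (f x - f y)| := by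
              have := abs_sub (f x - f y) (f x - f z)
              nlinarith [abs_sub_le (f x - f y) 0 (f x - f z),
                abs_add_le (f x - f z) ((f x - f y) - (f x - f z)),
                abs_sub_comm (f x - f y) (f x - f z),
                abs_sub_comm (f x) (f z), abs_sub_comm (f z) (f y),
                abs_sub_comm ((f x - f z)) ((f x - f y))]
          _ = |f x - f z| + |f y - f z| := by
              congr 1
              rw [show (f x - f z) - (f x - f y) = f y - f z by ring]
          _ = |f y - f z| + |f z - f x| := by rw [abs_sub_comm (f x) (f z)]; ring
      linarith
    -- upper bound on |f y - f z| via supRatio at y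
    have hsry : |supRatio f y (r/8) - lipUpper f y| < δ :=
      hδ₁ (r/8) (by linarith) (by linarith) y
    have hLy : lipUpper f y < M + δ := by
      have := hδ₂ (a := y) (b := x) (by linarith)
      rw [Real.dist_eq] at this
      have := abs_lt.1 this
      linarith [this.1]
    have hup : |f y - f z| ≤ (M + 2*δ) * (r/8) := by
      have hmem : |f y - f z| ∈ (fun w => |f y - f w|) '' ball y (r/8) :=
        Set.mem_image_of_mem _ hz
    -- bddAbove
      have hbdd : BddAbove ((fun w => |f y - f w|) '' ball y (r/8)) := by
        refine ⟨(K:ℝ) * (r/8), ?_⟩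
        rintro b ⟨w, hw, rfl⟩
        have := hK.dist_le_mul y w
        rw [Real.dist_eq] at this
        have hwle : dist y w ≤ r/8 := by
          have := mem_ball.1 hw
          rw [dist_comm] at this
          exact le_of_lt this
        calc |f y - f w| ≤ (K:ℝ) * dist y w := this
          _ ≤ (K:ℝ) * (r/8) := by
            exact mul_le_mul_of_nonneg_left hwle (K.coe_nonneg)
      have hle : |f y - f z| ≤ sSup ((fun w => |f y - f w|) '' ball y (r/8)) :=
        le_csSup hbdd hmem
      have h2 : supRatio f y (r/8) < M + 2*δ := by
        have := abs_lt.1 hsry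
        linarith [this.2]
      rw [supRatio, div_lt_iff₀ (by linarith : (0:ℝ) < r/8)] at h2
      linarith
    -- contradiction: M < 3δ but 4δ < M
    nlinarith
  -- measure estimate
  have hmeas : μ (ball x r) ≤ ENNReal.ofReal (L^4) * μ (ball y (r/8)) := by
    have h0 : μ (ball x r) ≤ μ (ball y (2*r)) := by
      apply measure_mono
      intro z hz
      have : dist z x < r := mem_ball.1 hz
      have hxy : dist x y < r/2 := by rw [dist_comm]; exact mem_ball.1 hy
      have : dist z y < 2*r := by
        calc dist z y ≤ dist z x + dist x y := dist_triangle _ _ _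
          _ < r + r/2 := by linarith
          _ ≤ 2*r := by linarith
      exact mem_ball.2 this
    have h1 : μ (ball y (2*r)) ≤ ENNReal.ofReal L * μ (ball y r) := hdouble y r hr0
    have h2 : μ (ball y r) ≤ ENNReal.ofReal L * μ (ball y (r/2)) := by
      have := hdouble y (r/2) (by linarith)
      rwa [show 2*(r/2) = r by ring] at this
    have h3 : μ (ball y (r/2)) ≤ ENNReal.ofReal L * μ (ball y (r/4)) := by
      have := hdouble y (r/4) (by linarith)
      rwa [show 2*(r/4) = r/2 by ring] at this
    have h4 : μ (ball y (r/4)) ≤ ENNReal.ofReal L * μ (ball y (r/8)) := by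
      have := hdouble y (r/8) (by linarith)
      rwa [show 2*(r/8) = r/4 by ring] at this
    have hLnn : (0:ℝ) ≤ L := le_of_lt hL0
    calc μ (ball x r) ≤ μ (ball y (2*r)) := h0
      _ ≤ ENNReal.ofReal L * μ (ball y r) := h1
      _ ≤ ENNReal.ofReal L * (ENNReal.ofReal L * μ (ball y (r/2))) :=
          mul_le_mul_right h2 _
      _ ≤ ENNReal.ofReal L * (ENNReal.ofReal L * (ENNReal.ofReal L * μ (ball y (r/4)))) :=
          mul_le_mul_right (mul_le_mul_right h3 _) _
      _ ≤ ENNReal.ofReal L * (ENNReal.ofReal L * (ENNReal.ofReal L *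
            (ENNReal.ofReal L * μ (ball y (r/8))))) :=
          mul_le_mul_right (mul_le_mul_right (mul_le_mul_right h4 _) _) _
      _ = ENNReal.ofReal (L^4) * μ (ball y (r/8)) := by
          rw [ENNReal.ofReal_pow hLnn]
          ring
  calc ENNReal.ofReal ((1/L)^4) * μ (ball x r)
      ≤ ENNReal.ofReal ((1/L)^4) * (ENNReal.ofReal (L^4) * μ (ball y (r/8))) :=
        mul_le_mul_right hmeas _
    _ = (ENNReal.ofReal ((1/L)^4) * ENNReal.ofReal (L^4)) * μ (ball y (r/8)) := by
        rw [mul_assoc]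
    _ = μ (ball y (r/8)) := by
        rw [← ENNReal.ofReal_mul (by positivity)]
        have : (1/L)^4 * L^4 = 1 := by field_simp
        rw [this, ENNReal.ofReal_one, one_mul]
    _ ≤ μ {z ∈ ball x r | (1/8) * lipUpper f x * dist z x ≤ |f z - f x|} :=
        measure_mono hincl
end

section
/- Let (X, ρ, μ) be a metric measure space of homogeneous type with μ(B) ∈ (0,∞) for all balls B and μ({x}) = 0 for all x ∈ X. Let p ∈ [1,∞). Then there exists a constant C > 0, depending only on p and the doubling constant of μ, such that for every f ∈ C_c*(X), liminf_{λ→∞} λ^p ∫_X ∫_X 1_{D_λ}(x,y) dμ(x) dμ(y) ≥ C ∫_X [Lip f(x)]^p dμ(x), where D_λ := { (x,y) ∈ X×X : |f(x)−f(y)| > λ·ρ(x,y)·[μ(B(x,ρ(x,y)))]^{1/p} }. -/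
open Metric MeasureTheory Filter Topology
open scoped ENNReal

/-- doubling iterated: if `b ≤ 2^k * a` then `μ (ball x b) ≤ L^k μ (ball x a)`. -/
lemma ball_doubling_pow {X : Type*} [MetricSpace X] [MeasurableSpace X]
    (μ : Measure X) (L : ℝ)
    (hdouble : ∀ (x : X) (r : ℝ), 0 < r →
      μ (ball x (2 * r)) ≤ ENNReal.ofReal L * μ (ball x r))
    (x : X) {a : ℝ} (ha : 0 < a) (k : ℕ) {b : ℝ} (hb : b ≤ 2 ^ k * a) :
    μ (ball x b) ≤ ENNReal.ofReal L ^ k * μ (ball x a) := by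
  have H : ∀ k : ℕ, μ (ball x (2 ^ k * a)) ≤ ENNReal.ofReal L ^ k * μ (ball x a) := by
    intro k
    induction k with
    | zero => simp
    | succ n ih =>
      have h1 : (2:ℝ) ^ (n+1) * a = 2 * (2 ^ n * a) := by ring
      have h2 : 0 < (2:ℝ) ^ n * a := by positivity
      calc μ (ball x ((2:ℝ) ^ (n+1) * a)) = μ (ball x (2 * (2 ^ n * a))) := by rw [h1]
        _ ≤ ENNReal.ofReal L * μ (ball x (2 ^ n * a)) := hdouble x _ h2
        _ ≤ ENNReal.ofReal L * (ENNReal.ofReal L ^ n * μ (ball x a)) := by gcongr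
        _ = ENNReal.ofReal L ^ (n+1) * μ (ball x a) := by ring
  exact le_trans (measure_mono (ball_subset_ball hb)) (H k)

lemma lintegral_biUnion_finset_le {α ι : Type*} [MeasurableSpace α] (μ : Measure α)
    (h : α → ENNReal) (t : Finset ι) (A : ι → Set α) :
    ∫⁻ z in ⋃ i ∈ t, A i, h z ∂μ ≤ ∑ i ∈ t, ∫⁻ z in A i, h z ∂μ := by
  classical
  induction t using Finset.induction with
  | empty => simp
  | insert _ _ hnotmem ih =>
    rename_i a t'
    rw [Finset.set_biUnion_insert, Finset.sum_insert hnotmem]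
    exact le_trans (lintegral_union_le _ _ _) (by gcongr)

set_option maxHeartbeats 4000000 in
/-- **lower estimate.** In a metric measure space of homogeneous type with
balls of positive finite measure and no atoms, for `p ∈ [1,∞)` there is `C > 0`,
depending only on `p` and the doubling constant, with
`liminf_{λ→∞} λ^p (μ×μ)(D_λ) ≥ C ∫ (Lip f)^p dμ` for all `f ∈ C_c*(X)`, where
`D_λ = {(x,y) : |f(x)−f(y)| > λ ρ(x,y) μ(B(x,ρ(x,y)))^{1/p}}`. -/
theorem lower_estimate_BVSY {X : Type*} [MetricSpace X] [MeasurableSpace X] [BorelSpace X]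
    (μ : Measure X) (L : ℝ) (hL : 1 ≤ L)
    (hdouble : ∀ (x : X) (r : ℝ), 0 < r →
      μ (ball x (2 * r)) ≤ ENNReal.ofReal L * μ (ball x r))
    (hpos : ∀ (x : X) (r : ℝ), 0 < r → 0 < μ (ball x r))
    (hfin : ∀ (x : X) (r : ℝ), 0 < r → μ (ball x r) < ⊤)
    (hpt : ∀ x : X, μ {x} = 0)
    (p : ℝ) (hp : 1 ≤ p) :
    ∃ C : ℝ, 0 < C ∧ ∀ f : X → ℝ, MemCcStar f →
      ENNReal.ofReal C * ∫⁻ x, ENNReal.ofReal (lipUpper f x ^ p) ∂μ ≤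
        liminf (fun lam : ℝ =>
          ENNReal.ofReal (lam ^ p) *
            (μ.prod μ) {xy : X × X |
              lam * dist xy.1 xy.2 * (μ (ball xy.1 (dist xy.1 xy.2))).toReal ^ (1/p)
                < |f xy.1 - f xy.2|}) atTop := by
  haveI : SigmaFinite μ := by
    rcases isEmpty_or_nonempty X with hX | hX
    · refine ⟨⟨⟨fun _ => Set.univ, fun _ => trivial, fun _ => ?_, Set.iUnion_const _⟩⟩⟩
      rw [Set.univ_eq_empty_iff.mpr hX]
      simp
    · obtain ⟨x₀⟩ := hX
      refine ⟨⟨⟨fun n => ball x₀ (n+1), fun _ => trivial,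
        fun n => hfin x₀ (n+1) (by positivity), ?_⟩⟩⟩
      ext z
      simp only [Set.mem_iUnion, Set.mem_univ, iff_true, mem_ball]
      obtain ⟨n, hn⟩ := exists_nat_gt (dist z x₀)
      exact ⟨n, by push_cast; linarith⟩
  have hp0 : (0:ℝ) < p := by linarith
  have hpne : p ≠ 0 := ne_of_gt hp0
  have hL0 : (0:ℝ) < L := by linarith
  have h16p : (0:ℝ) < 16 ^ p := Real.rpow_pos_of_pos (by norm_num) p
  refine ⟨1 / (2 * 16 ^ p * L ^ 10), by positivity, ?_⟩
  set C : ℝ := 1 / (2 * 16 ^ p * L ^ 10) with hCdef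
  intro f hf
  obtain ⟨⟨K, hK⟩, hfsupp, -, hgc, hgs, hunif⟩ := hf
  set g := lipUpper f with hgdef
  -- basic facts about supRatio
  have himg_mem : ∀ (x : X) (r : ℝ), 0 < r → (0:ℝ) ∈ (fun y => |f x - f y|) '' ball x r :=
    fun x r hr => ⟨x, mem_ball_self hr, by simp⟩
  have himg_bdd : ∀ (x : X) (r : ℝ), 0 < r → ∀ v ∈ (fun y => |f x - f y|) '' ball x r,
      v ≤ K * r := by
    rintro x r hr v ⟨z, hz, rfl⟩
    have h1 : |f x - f z| ≤ K * dist x z := by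
      have := hK.dist_le_mul x z
      rwa [Real.dist_eq] at this
    have h2 : dist x z ≤ r := by
      rw [mem_ball, dist_comm] at hz; exact hz.le
    calc |f x - f z| ≤ (K:ℝ) * dist x z := h1
      _ ≤ K * r := by
          have : (0:ℝ) ≤ K := K.coe_nonneg
          nlinarith
  have himg_bddAbove : ∀ (x : X) (r : ℝ), 0 < r →
      BddAbove ((fun y => |f x - f y|) '' ball x r) :=
    fun x r hr => ⟨K * r, fun v hv => himg_bdd x r hr v hv⟩
  have hsup_le : ∀ (x : X) (r : ℝ), 0 < r → ∀ y, dist y x < r →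
      |f x - f y| ≤ supRatio f x r * r := by
    intro x r hr y hy
    have h1 : |f x - f y| ≤ sSup ((fun y => |f x - f y|) '' ball x r) :=
      le_csSup (himg_bddAbove x r hr) ⟨y, hy, rfl⟩
    rwa [supRatio, div_mul_cancel₀ _ (ne_of_gt hr)]
  have hsup_nonneg : ∀ (x : X) (r : ℝ), 0 < r → 0 ≤ supRatio f x r := by
    intro x r hr
    exact div_nonneg (le_csSup (himg_bddAbove x r hr) (himg_mem x r hr)) hr.le
  have hsup_leK : ∀ (x : X) (r : ℝ), 0 < r → supRatio f x r ≤ K := by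
    intro x r hr
    rw [supRatio, div_le_iff₀ hr]
    exact csSup_le ⟨0, himg_mem x r hr⟩ (himg_bdd x r hr)
  -- bounds on g
  have hg_nonneg : ∀ x, 0 ≤ g x := by
    intro x
    by_contra h
    push_neg at h
    obtain ⟨δ, hδ, hδ'⟩ := hunif (-(g x)) (by linarith)
    have h1 := hδ' (δ/2) (by linarith) (by linarith) x
    have h2 := hsup_nonneg x (δ/2) (by linarith)
    rw [abs_lt] at h1
    linarith [h1.2]
  have hg_leK : ∀ x, g x ≤ K := by
    intro x
    by_contra h
    push_neg at h
    obtain ⟨δ, hδ, hδ'⟩ := hunif (g x - K) (by linarith)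
    have h1 := hδ' (δ/2) (by linarith) (by linarith) x
    have h2 := hsup_leK x (δ/2) (by linarith)
    rw [abs_lt] at h1
    linarith [h1.1]
  set I := ∫⁻ x, ENNReal.ofReal (g x ^ p) ∂μ with hIdef
  rcases eq_or_ne I 0 with hI0 | hI0
  · rw [hI0, mul_zero]; exact zero_le
  -- support facts
  have hTc : IsCompact (tsupport g) := hgs
  have hgz : ∀ x, x ∉ tsupport g → g x = 0 := fun x hx => image_eq_zero_of_notMem_tsupport hx
  have hmeas_gp : Measurable fun x => ENNReal.ofReal (g x ^ p) :=
    ((hgc.rpow_const fun x => Or.inr hp0.le).measurable).ennreal_ofReal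
  have hTne : (tsupport g).Nonempty := by
    rcases (tsupport g).eq_empty_or_nonempty with h | h
    · exfalso
      apply hI0
      rw [hIdef]
      have : ∀ x : X, ENNReal.ofReal (g x ^ p) = 0 := by
        intro x
        have : g x = 0 := hgz x (by rw [h]; exact Set.notMem_empty x)
        rw [this, Real.zero_rpow hpne, ENNReal.ofReal_zero]
      simp [this]
    · exact h
  obtain ⟨z₀, hz₀⟩ := hTne
  obtain ⟨R, hR⟩ := hTc.isBounded.subset_closedBall z₀
  set Rb : ℝ := |R| + 1 with hRbdef
  have hRb0 : 0 < Rb := by positivity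
  have hTsub : tsupport g ⊆ ball z₀ Rb := by
    intro z hz
    have := hR hz
    rw [mem_closedBall] at this
    rw [mem_ball]
    calc dist z z₀ ≤ R := this
      _ ≤ |R| := le_abs_self R
      _ < Rb := by rw [hRbdef]; linarith
  have hμT_fin : μ (tsupport g) < ⊤ :=
    lt_of_le_of_lt (measure_mono hTsub) (hfin z₀ Rb hRb0)
  have hIle : I ≤ ENNReal.ofReal (((K:ℝ)+1) ^ p) * μ (tsupport g) := by
    rw [hIdef]
    calc ∫⁻ x, ENNReal.ofReal (g x ^ p) ∂μ
        ≤ ∫⁻ x, (tsupport g).indicator (fun _ => ENNReal.ofReal (((K:ℝ)+1) ^ p)) x ∂μ := by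
          apply lintegral_mono
          intro x
          by_cases hx : x ∈ tsupport g
          · rw [Set.indicator_of_mem hx]
            apply ENNReal.ofReal_le_ofReal
            exact Real.rpow_le_rpow (hg_nonneg x) (by linarith [hg_leK x]) hp0.le
          · simp only [Set.indicator_of_notMem hx]
            have hx0 : g x = 0 := hgz x hx
            simp [hx0, Real.zero_rpow hpne]
      _ = ENNReal.ofReal (((K:ℝ)+1) ^ p) * μ (tsupport g) := by
          rw [lintegral_indicator (isClosed_tsupport g).measurableSet, setLIntegral_const]
  have hIfin : I ≠ ⊤ :=
    ne_top_of_le_ne_top (by exact ENNReal.mul_ne_top ENNReal.ofReal_ne_top hμT_fin.ne) hIle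
  have hμT_pos : μ (tsupport g) ≠ 0 := by
    intro h
    exact hI0 (le_antisymm (by simpa [h] using hIle) zero_le)
  -- choice of the level e
  have hbpos : 0 < I / 2 / μ (tsupport g) :=
    ENNReal.div_pos (by simp [ENNReal.div_eq_zero_iff, hI0]) hμT_fin.ne
  have hbne : I / 2 / μ (tsupport g) ≠ ⊤ :=
    (ENNReal.div_lt_top (ENNReal.div_lt_top hIfin (by norm_num)).ne hμT_pos).ne
  set e : ℝ := min ((I / 2 / μ (tsupport g)).toReal) 1 / 2 with hedef
  have hepos : 0 < e := by
    rw [hedef]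
    have := ENNReal.toReal_pos hbpos.ne' hbne
    have : 0 < min ((I / 2 / μ (tsupport g)).toReal) 1 := lt_min this one_pos
    linarith
  have he1 : e ≤ 1 := by
    rw [hedef]
    have : min ((I / 2 / μ (tsupport g)).toReal) 1 ≤ 1 := min_le_right _ _
    linarith
  have heI : ENNReal.ofReal (e ^ p) * μ (tsupport g) ≤ I / 2 := by
    have h1 : e ^ p ≤ e := by
      calc e ^ p ≤ e ^ (1:ℝ) := Real.rpow_le_rpow_of_exponent_ge hepos he1 hp
        _ = e := Real.rpow_one e
    have h2 : ENNReal.ofReal (e ^ p) ≤ I / 2 / μ (tsupport g) := by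
      calc ENNReal.ofReal (e ^ p) ≤ ENNReal.ofReal e := ENNReal.ofReal_le_ofReal h1
        _ ≤ ENNReal.ofReal ((I / 2 / μ (tsupport g)).toReal) := by
            apply ENNReal.ofReal_le_ofReal
            rw [hedef]
            have := min_le_left ((I / 2 / μ (tsupport g)).toReal) 1
            linarith [ENNReal.toReal_nonneg (a := I / 2 / μ (tsupport g))]
        _ = I / 2 / μ (tsupport g) := ENNReal.ofReal_toReal hbne
    calc ENNReal.ofReal (e ^ p) * μ (tsupport g) ≤ I / 2 / μ (tsupport g) * μ (tsupport g) := by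
          gcongr
      _ = I / 2 := ENNReal.div_mul_cancel hμT_pos hμT_fin.ne
  -- the level set E
  set E : Set X := {x | e ≤ g x} with hEdef
  have hEclosed : IsClosed E := isClosed_le continuous_const hgc
  have hET : E ⊆ tsupport g := by
    intro x hx
    apply subset_tsupport
    rw [Function.mem_support]
    have hex : e ≤ g x := hx
    intro h0
    rw [h0] at hex
    linarith
  have hEcompact : IsCompact E := hTc.of_isClosed_subset hEclosed hET
  have hEint : I / 2 ≤ ∫⁻ x in E, ENNReal.ofReal (g x ^ p) ∂μ := by
    have hsplit : ∫⁻ x in E, ENNReal.ofReal (g x ^ p) ∂μ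
        + ∫⁻ x in Eᶜ, ENNReal.ofReal (g x ^ p) ∂μ = I :=
      lintegral_add_compl _ hEclosed.measurableSet
    have hcompl : ∫⁻ x in Eᶜ, ENNReal.ofReal (g x ^ p) ∂μ ≤ I / 2 := by
      calc ∫⁻ x in Eᶜ, ENNReal.ofReal (g x ^ p) ∂μ
          ≤ ∫⁻ x in Eᶜ, (tsupport g).indicator (fun _ => ENNReal.ofReal (e ^ p)) x ∂μ := by
            apply setLIntegral_mono
              (Measurable.indicator measurable_const (isClosed_tsupport g).measurableSet)
            intro x hx
            have hgx : g x < e := by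
              by_contra hc
              push_neg at hc
              exact hx hc
            by_cases hxT : x ∈ tsupport g
            · rw [Set.indicator_of_mem hxT]
              exact ENNReal.ofReal_le_ofReal
                (Real.rpow_le_rpow (hg_nonneg x) hgx.le hp0.le)
            · rw [Set.indicator_of_notMem hxT, hgz x hxT, Real.zero_rpow hpne]
              simp
        _ ≤ ∫⁻ x, (tsupport g).indicator (fun _ => ENNReal.ofReal (e ^ p)) x ∂μ :=
            setLIntegral_le_lintegral _ _
        _ = ENNReal.ofReal (e ^ p) * μ (tsupport g) := by
            rw [lintegral_indicator (isClosed_tsupport g).measurableSet, setLIntegral_const]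
        _ ≤ I / 2 := heI
    have h2 : I ≤ ∫⁻ x in E, ENNReal.ofReal (g x ^ p) ∂μ + I / 2 :=
      hsplit.symm.le.trans (add_le_add le_rfl hcompl)
    have h3 : I - I / 2 ≤ ∫⁻ x in E, ENNReal.ofReal (g x ^ p) ∂μ :=
      tsub_le_iff_right.mpr h2
    rwa [ENNReal.sub_half hIfin] at h3
  -- parameters ε₁, δ₁, δ₂, δ
  set ε₁ : ℝ := e / 8 with hε₁def
  have hε₁pos : 0 < ε₁ := by rw [hε₁def]; linarith
  obtain ⟨δ₁, hδ₁pos, hδ₁⟩ := hunif ε₁ hε₁pos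
  have hgu : UniformContinuous g :=
    hgc.uniformContinuous_of_tendsto_cocompact hgs.is_zero_at_infty
  rw [Metric.uniformContinuous_iff] at hgu
  obtain ⟨δ₂, hδ₂pos, hδ₂⟩ := hgu ε₁ hε₁pos
  set δ : ℝ := min 1 (min δ₁ δ₂ / 128) with hδdef
  have hδpos : 0 < δ := by
    rw [hδdef]
    apply lt_min one_pos
    have := lt_min hδ₁pos hδ₂pos
    linarith
  have hδ1 : δ ≤ 1 := min_le_left _ _
  have hδδ₁ : 128 * δ ≤ δ₁ := by
    have h1 : δ ≤ min δ₁ δ₂ / 128 := min_le_right _ _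
    have h2 : min δ₁ δ₂ ≤ δ₁ := min_le_left _ _
    linarith
  have hδδ₂ : 128 * δ ≤ δ₂ := by
    have h1 : δ ≤ min δ₁ δ₂ / 128 := min_le_right _ _
    have h2 : min δ₁ δ₂ ≤ δ₂ := min_le_right _ _
    linarith
  -- local Lipschitz estimate
  have hLL : ∀ u v : X, dist u v < δ₁ / 2 → |f u - f v| ≤ (g u + ε₁) * dist u v := by
    intro u v huv
    rcases eq_or_ne u v with rfl | hne
    · simp [hg_nonneg u, hε₁pos.le]
    · have hd : 0 < dist u v := dist_pos.mpr hne
      have key : ∀ ρ : ℝ, dist u v < ρ → ρ < δ₁ → |f u - f v| ≤ (g u + ε₁) * ρ := by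
        intro ρ h1 h2
        have h3 : 0 < ρ := lt_trans hd h1
        have h4 := hsup_le u ρ h3 v (by rw [dist_comm]; exact h1)
        have h5 := hδ₁ ρ h3 h2 u
        rw [abs_lt] at h5
        nlinarith [h5.2]
      refine le_of_forall_pos_le_add (fun η hη => ?_)
      have hga : 0 < g u + ε₁ := by have := hg_nonneg u; linarith
      set ρ := min (dist u v + η / (g u + ε₁)) ((dist u v + δ₁/2) / 2) with hρdef
      have hρ1 : dist u v < ρ :=
        lt_min (lt_add_of_pos_right _ (div_pos hη hga)) (by linarith)
      have hρ2 : ρ < δ₁ := lt_of_le_of_lt (min_le_right _ _) (by linarith)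
      have hkey := key ρ hρ1 hρ2
      have hb : (g u + ε₁) * ρ ≤ (g u + ε₁) * (dist u v + η / (g u + ε₁)) :=
        mul_le_mul_of_nonneg_left (min_le_left _ _) hga.le
      have heq : (g u + ε₁) * (dist u v + η / (g u + ε₁)) = (g u + ε₁) * dist u v + η := by
        field_simp
      linarith
  -- uniform lower bound for measures of balls centred in E
  have hEcov : ∃ lam₀ : ℝ, 1 ≤ lam₀ ∧ ∀ lam, lam₀ ≤ lam → ∀ x ∈ E,
      ENNReal.ofReal ((((K:ℝ)+1) / (8*lam)) ^ p) < μ (ball x (4*δ)) := by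
    rcases Set.eq_empty_or_nonempty E with hE | ⟨x₀, hx₀⟩
    · exact ⟨1, le_rfl, fun lam _ x hx => absurd hx (by simp [hE])⟩
    · obtain ⟨t, ht⟩ := hEcompact.elim_finite_subcover (fun i : X => ball i (2*δ))
        (fun i => isOpen_ball) (fun x hx => Set.mem_iUnion.mpr ⟨x, mem_ball_self (by positivity)⟩)
      have htne : t.Nonempty := by
        rcases Set.mem_iUnion₂.mp (ht hx₀) with ⟨i, hi, -⟩
        exact ⟨i, hi⟩
      set m₀ := t.inf' htne fun i => μ (ball i (2*δ)) with hm₀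
      have hm₀pos : 0 < m₀ := by
        rw [hm₀, Finset.lt_inf'_iff]
        exact fun i _ => hpos i (2*δ) (by positivity)
      have hm₀1ne : min m₀ 1 ≠ ⊤ := ne_top_of_le_ne_top ENNReal.one_ne_top (min_le_right _ _)
      set c : ℝ := (min m₀ 1).toReal with hcdef
      have hcpos : 0 < c := ENNReal.toReal_pos (lt_min hm₀pos one_pos).ne' hm₀1ne
      have hcp : 0 < c ^ (1/p) := Real.rpow_pos_of_pos hcpos _
      refine ⟨max 1 (((K:ℝ)+1) / (4 * c ^ (1/p))), le_max_left _ _, ?_⟩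
      intro lam hlam x hx
      have hlam1 : (1:ℝ) ≤ lam := le_trans (le_max_left _ _) hlam
      have hlam2 : ((K:ℝ)+1) / (4 * c^(1/p)) ≤ lam := le_trans (le_max_right _ _) hlam
      have hK1 : (0:ℝ) < K + 1 := by positivity
      have h1 : ((K:ℝ)+1) / (8*lam) < c ^ (1/p) := by
        rw [div_lt_iff₀ (by linarith)]
        have h2 : ((K:ℝ)+1) ≤ 4 * c^(1/p) * lam := by
          rw [div_le_iff₀ (by positivity)] at hlam2
          linarith
        nlinarith
      have h2 : (((K:ℝ)+1)/(8*lam)) ^ p < c := by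
        have h3 := Real.rpow_lt_rpow (by positivity) h1 hp0
        have h4 : (c^(1/p))^p = c := by
          rw [← Real.rpow_mul hcpos.le, one_div_mul_cancel hpne, Real.rpow_one]
        rwa [h4] at h3
      obtain ⟨i, hi, hxi⟩ := Set.mem_iUnion₂.mp (ht hx)
      calc ENNReal.ofReal ((((K:ℝ)+1)/(8*lam))^p) < ENNReal.ofReal c :=
            (ENNReal.ofReal_lt_ofReal_iff hcpos).mpr h2
        _ = min m₀ 1 := ENNReal.ofReal_toReal hm₀1ne
        _ ≤ m₀ := min_le_left _ _
        _ ≤ μ (ball i (2*δ)) := Finset.inf'_le _ hi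
        _ ≤ μ (ball x (4*δ)) := by
            apply measure_mono
            intro z hz
            rw [mem_ball] at *
            have hxi' : dist x i < 2*δ := hxi
            calc dist z x ≤ dist z i + dist i x := dist_triangle _ _ _
              _ < 2*δ + 2*δ := by rw [dist_comm i x]; exact add_lt_add hz hxi'
              _ = 4*δ := by ring
  -- small balls have small measure
  have hball_zero : ∀ x : X, Tendsto (fun n : ℕ => μ (ball x (8*δ/2^(n+1)))) atTop (𝓝 0) := by
    intro x
    have h1 : Tendsto (μ ∘ fun n : ℕ => ball x (8*δ/2^(n+1))) atTop
        (𝓝 (μ (⋂ n : ℕ, ball x (8*δ/2^(n+1))))) := by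
      apply tendsto_measure_iInter_atTop
      · exact fun n => measurableSet_ball.nullMeasurableSet
      · intro n m hnm
        apply ball_subset_ball
        apply div_le_div_of_nonneg_left (by positivity) (by positivity)
        exact pow_le_pow_right₀ one_le_two (by omega)
      · exact ⟨0, (hfin x _ (by positivity)).ne⟩
    have h2 : (⋂ n : ℕ, ball x (8*δ/2^(n+1))) = {x} := by
      apply Set.eq_singleton_iff_unique_mem.mpr
      refine ⟨Set.mem_iInter.mpr fun n => mem_ball_self (by positivity), ?_⟩
      intro z hz
      rw [Set.mem_iInter] at hz
      by_contra hne
      have hdz : 0 < dist z x := dist_pos.mpr hne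
      obtain ⟨n, hn⟩ := pow_unbounded_of_one_lt (8*δ/dist z x) (one_lt_two (α := ℝ))
      have h3 : 8*δ/2^(n+1) < dist z x := by
        rw [div_lt_iff₀ (by positivity : (0:ℝ) < 2^(n+1))]
        calc 8*δ < dist z x * 2^n := by
              rw [div_lt_iff₀ hdz] at hn
              linarith
          _ ≤ dist z x * 2^(n+1) :=
              mul_le_mul_of_nonneg_left (pow_le_pow_right₀ one_le_two (Nat.le_succ n)) hdz.le
      exact absurd (mem_ball.mp (hz n)) (not_lt.mpr h3.le)
    rw [h2] at h1
    rw [hpt x] at h1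
    exact h1
  -- scale selection
  have hscale : ∀ lam : ℝ, 1 ≤ lam →
      (∀ x ∈ E, ENNReal.ofReal ((((K:ℝ)+1)/(8*lam))^p) < μ (ball x (4*δ))) →
      ∀ x ∈ E, ∃ rx : ℝ, 0 < rx ∧ rx ≤ 2*δ ∧
        μ (ball x (2*rx)) ≤ ENNReal.ofReal ((g x/(8*lam))^p) ∧
        ENNReal.ofReal ((g x/(8*lam))^p) < μ (ball x (4*rx)) := by
    intro lam hlam1 hcov x hx
    have hgx : e ≤ g x := hx
    have hgxpos : 0 < g x := lt_of_lt_of_le hepos hgx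
    have hτpos : 0 < (g x/(8*lam))^p := Real.rpow_pos_of_pos (by positivity) p
    have hτK : (g x/(8*lam))^p ≤ (((K:ℝ)+1)/(8*lam))^p := by
      apply Real.rpow_le_rpow (by positivity) _ hp0.le
      gcongr
      linarith [hg_leK x]
    have hex : ∃ n : ℕ, μ (ball x (8*δ/2^(n+1))) ≤ ENNReal.ofReal ((g x/(8*lam))^p) := by
      have h5 := (hball_zero x).eventually_lt_const (ENNReal.ofReal_pos.mpr hτpos)
      obtain ⟨n, hn⟩ := h5.exists
      exact ⟨n, hn.le⟩
    obtain ⟨n, hspec, hmin⟩ : ∃ n : ℕ,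
        μ (ball x (8*δ/2^(n+1))) ≤ ENNReal.ofReal ((g x/(8*lam))^p) ∧
        ∀ m, m < n → ¬ μ (ball x (8*δ/2^(m+1))) ≤ ENNReal.ofReal ((g x/(8*lam))^p) :=
      ⟨Nat.find hex, Nat.find_spec hex, fun m hm => Nat.find_min hex hm⟩
    refine ⟨2*δ/2^n, by positivity, ?_, ?_, ?_⟩
    · exact div_le_self (by positivity) (one_le_pow₀ one_le_two)
    · have harg : 2*(2*δ/2^n) = 8*δ/2^(n+1) := by
        field_simp
        ring
      rw [harg]
      exact hspec
    · have harg : 4*(2*δ/2^n) = 8*δ/2^n := by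
        field_simp
        ring
      rw [harg]
      rcases Nat.eq_zero_or_pos n with h0 | hposn
      · rw [h0]
        calc ENNReal.ofReal ((g x/(8*lam))^p)
            ≤ ENNReal.ofReal ((((K:ℝ)+1)/(8*lam))^p) := ENNReal.ofReal_le_ofReal hτK
          _ < μ (ball x (4*δ)) := hcov x hx
          _ ≤ μ (ball x (8*δ/2^0)) := measure_mono (ball_subset_ball (by norm_num; linarith))
      · have hmin2 := hmin (n-1) (Nat.sub_lt hposn one_pos)
        push_neg at hmin2
        have harg2 : n - 1 + 1 = n := Nat.succ_pred_eq_of_pos hposn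
        rw [harg2] at hmin2
        exact hmin2
  -- main estimate for fixed large lam
  obtain ⟨lam₀, hlam₀1, hlam₀⟩ := hEcov
  have hmain : ∀ lam, lam₀ ≤ lam →
      ENNReal.ofReal C * I ≤ ENNReal.ofReal (lam ^ p) *
        (μ.prod μ) {xy : X × X | lam * dist xy.1 xy.2 *
          (μ (ball xy.1 (dist xy.1 xy.2))).toReal ^ (1/p) < |f xy.1 - f xy.2|} := by
    intro lam hlam
    have hlam1 : (1:ℝ) ≤ lam := le_trans hlam₀1 hlam
    have hlampos : (0:ℝ) < lam := by linarith
    set D : Set (X × X) := {xy : X × X | lam * dist xy.1 xy.2 *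
      (μ (ball xy.1 (dist xy.1 xy.2))).toReal ^ (1/p) < |f xy.1 - f xy.2|} with hDdef
    choose! rr hrr0 hrrδ hrr2 hrr4 using hscale lam hlam1 (hlam₀ lam hlam)
    have hychoice : ∀ x ∈ E, ∃ yx : X, dist yx x < rr x ∧ 3/4 * (g x * rr x) ≤ |f x - f yx| := by
      intro x hx
      have h0 := hrr0 x hx
      have h2δ := hrrδ x hx
      have hgx : e ≤ g x := hx
      have hgxpos : 0 < g x := lt_of_lt_of_le hepos hgx
      have hε₁gx : ε₁ ≤ g x / 8 := by rw [hε₁def]; linarith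
      have hrδ₁ : rr x < δ₁ := by linarith [hδpos]
      have h5 := hδ₁ (rr x) h0 hrδ₁ x
      rw [abs_lt] at h5
      have hsS : 3/4 * (g x * rr x) < sSup ((fun y => |f x - f y|) '' ball x (rr x)) := by
        have h6 : g x - ε₁ < supRatio f x (rr x) := by linarith [h5.1]
        rw [supRatio, lt_div_iff₀ h0] at h6
        nlinarith
      obtain ⟨v, hv, hlt⟩ := exists_lt_of_lt_csSup ⟨0, himg_mem x _ h0⟩ hsS
      obtain ⟨yx, hyx, rfl⟩ := hv
      exact ⟨yx, mem_ball.mp hyx, hlt.le⟩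
    choose! yy hyy hyyf using hychoice
    -- the boxes sit inside D
    have hbox : ∀ x ∈ E, ∀ a b : X, dist a x ≤ rr x/16 → dist b (yy x) ≤ rr x/16 →
        (a, b) ∈ D := by
      intro x hx a b hax hby
      have h0 := hrr0 x hx
      have hδr := hrrδ x hx
      have hgx : e ≤ g x := hx
      have hgxpos : 0 < g x := lt_of_lt_of_le hepos hgx
      have hε₁gx : ε₁ ≤ g x / 8 := by rw [hε₁def]; linarith
      have hyx := hyy x hx
      have hyf := hyyf x hx
      have hga : g a ≤ g x + ε₁ := by
        have hd2 : dist a x < δ₂ := by linarith [hδpos]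
        have h7 := hδ₂ hd2
        rw [Real.dist_eq, abs_lt] at h7
        linarith [h7.1]
      have hgb' : g b ≤ g x + ε₁ := by
        have hdbx : dist b x < δ₂ := by
          calc dist b x ≤ dist b (yy x) + dist (yy x) x := dist_triangle _ _ _
            _ < rr x/16 + rr x := by linarith
            _ < δ₂ := by linarith [hδpos]
        have h7 := hδ₂ hdbx
        rw [Real.dist_eq, abs_lt] at h7
        linarith [h7.1]
      have hfa : |f a - f x| ≤ g x * rr x / 8 := by
        have h1 : dist a x < δ₁/2 := by linarith [hδpos]
        calc |f a - f x| ≤ (g a + ε₁) * dist a x := hLL a x h1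
          _ ≤ (2 * g x) * (rr x/16) :=
              mul_le_mul (by linarith) hax dist_nonneg (by linarith)
          _ = g x * rr x/8 := by ring
      have hfb : |f b - f (yy x)| ≤ g x * rr x / 8 := by
        have h1 : dist b (yy x) < δ₁/2 := by linarith [hδpos]
        calc |f b - f (yy x)| ≤ (g b + ε₁) * dist b (yy x) := hLL b (yy x) h1
          _ ≤ (2 * g x) * (rr x/16) :=
              mul_le_mul (by linarith) hby dist_nonneg (by linarith)
          _ = g x * rr x/8 := by ring
      have hflow : g x * rr x / 2 ≤ |f a - f b| := by
        have t1 : |f x - f (yy x)| ≤ |f x - f a| + |f a - f (yy x)| := abs_sub_le _ _ _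
        have t2 : |f a - f (yy x)| ≤ |f a - f b| + |f b - f (yy x)| := abs_sub_le _ _ _
        have t3 : |f x - f a| = |f a - f x| := abs_sub_comm _ _
        linarith
      have hdab : dist a b ≤ 9/8 * rr x := by
        have h5 : dist x (yy x) < rr x := by rw [dist_comm]; exact hyx
        have h6 : dist (yy x) b = dist b (yy x) := dist_comm _ _
        calc dist a b ≤ dist a x + dist x (yy x) + dist (yy x) b := dist_triangle4 a x (yy x) b
          _ ≤ rr x/16 + rr x + rr x/16 := by linarith
          _ = 9/8 * rr x := by ring
      have hμab : μ (ball a (dist a b)) ≤ ENNReal.ofReal ((g x/(8*lam))^p) := by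
        refine le_trans (measure_mono ?_) (hrr2 x hx)
        intro z hz
        rw [mem_ball] at *
        calc dist z x ≤ dist z a + dist a x := dist_triangle _ _ _
          _ < dist a b + rr x/16 := add_lt_add_of_lt_of_le hz hax
          _ ≤ 2 * rr x := by linarith
      have hμr : (μ (ball a (dist a b))).toReal ^ (1/p) ≤ g x/(8*lam) := by
        have h7 : (μ (ball a (dist a b))).toReal ≤ (g x/(8*lam))^p :=
          ENNReal.toReal_le_of_le_ofReal (by positivity) hμab
        have h8 := Real.rpow_le_rpow ENNReal.toReal_nonneg h7 (by positivity : (0:ℝ) ≤ 1/p)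
        rwa [← Real.rpow_mul (by positivity : (0:ℝ) ≤ g x/(8*lam)), mul_one_div,
          div_self hpne, Real.rpow_one] at h8
      have hQ0 : 0 ≤ (μ (ball a (dist a b))).toReal ^ (1/p) :=
        Real.rpow_nonneg ENNReal.toReal_nonneg _
      have hcore : lam * dist a b * (μ (ball a (dist a b))).toReal ^ (1/p) ≤
          lam * (9/8*rr x) * (g x/(8*lam)) := by
        apply mul_le_mul _ hμr hQ0 (by positivity)
        apply mul_le_mul_of_nonneg_left hdab (by linarith)
      have heq2 : lam * (9/8*rr x) * (g x/(8*lam)) = 9/64 * (g x * rr x) := by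
        field_simp
        ring
      show lam * dist a b * (μ (ball a (dist a b))).toReal ^ (1/p) < |f a - f b|
      calc lam * dist a b * (μ (ball a (dist a b))).toReal ^ (1/p)
          ≤ 9/64 * (g x * rr x) := by rw [← heq2]; exact hcore
        _ < g x * rr x / 2 := by nlinarith
        _ ≤ |f a - f b| := hflow
    -- Vitali covering
    obtain ⟨u, huE, hu_disj, hu_cov⟩ :=
      Vitali.exists_disjoint_subfamily_covering_enlargement_closedBall E (fun b : X => b)
        (fun b => rr b / 16) (2*δ) (fun a ha => by
          have := hrrδ a ha
          linarith [hδpos]) 4 (by norm_num)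
    -- u is finite
    have hubound : (⋃ b : ↥u, closedBall (b : X) (rr b / 16)) ⊆ ball z₀ (Rb + 2) := by
      rintro z hz
      obtain ⟨b, hzb⟩ := Set.mem_iUnion.mp hz
      have hbE : (b:X) ∈ E := huE b.2
      have h1 : dist (b:X) z₀ < Rb := mem_ball.mp (hTsub (hET hbE))
      have h2 : rr (b:X) / 16 ≤ 1 := by
        have := hrrδ _ hbE
        linarith [hδ1]
      have h3 := mem_closedBall.mp hzb
      rw [mem_ball]
      calc dist z z₀ ≤ dist z (b:X) + dist (b:X) z₀ := dist_triangle _ _ _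
        _ < Rb + 2 := by linarith
    have hufin : u.Finite := by
      have hLne0 : ENNReal.ofReal L ≠ 0 := (ENNReal.ofReal_pos.mpr hL0).ne'
      set ε₀ : ENNReal := ENNReal.ofReal ((e/(8*lam))^p) / ENNReal.ofReal L ^ 6 with hε₀def
      have hε₀pos : 0 < ε₀ := by
        apply ENNReal.div_pos _ (ENNReal.pow_ne_top ENNReal.ofReal_ne_top)
        simp only [ne_eq, ENNReal.ofReal_eq_zero, not_le]
        exact Real.rpow_pos_of_pos (by positivity) p
      have hle : ∀ b : ↥u, ε₀ ≤ μ (closedBall (b:X) (rr b / 16)) := by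
        intro b
        have hbE : (b:X) ∈ E := huE b.2
        have h0 := hrr0 _ hbE
        have h1 : ENNReal.ofReal ((e/(8*lam))^p) ≤ ENNReal.ofReal ((g (b:X)/(8*lam))^p) := by
          apply ENNReal.ofReal_le_ofReal
          apply Real.rpow_le_rpow (by positivity) _ hp0.le
          gcongr
          exact hbE
        have h3 : μ (ball (b:X) (4 * rr (b:X))) ≤
            ENNReal.ofReal L ^ 6 * μ (ball (b:X) (rr (b:X)/16)) :=
          ball_doubling_pow μ L hdouble _ (by positivity) 6 (by
            have h26 : (2:ℝ)^6 = 64 := by norm_num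
            rw [h26]
            linarith)
        have h4 : ENNReal.ofReal ((e/(8*lam))^p) ≤
            ENNReal.ofReal L ^ 6 * μ (closedBall (b:X) (rr (b:X)/16)) := by
          refine le_trans h1 (le_trans (hrr4 _ hbE).le (h3.trans ?_))
          gcongr
          exact ball_subset_closedBall
        rw [hε₀def, ENNReal.div_le_iff (pow_ne_zero _ hLne0)
          (ENNReal.pow_ne_top ENNReal.ofReal_ne_top)]
        calc ENNReal.ofReal ((e/(8*lam))^p)
            ≤ ENNReal.ofReal L ^ 6 * μ (closedBall (b:X) (rr (b:X)/16)) := h4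
          _ = μ (closedBall (b:X) (rr (b:X)/16)) * ENNReal.ofReal L ^ 6 := mul_comm _ _
      have hfin2 := MeasureTheory.Measure.finite_const_le_meas_of_disjoint_iUnion μ
        (ε := ε₀) hε₀pos
        (As := fun b : ↥u => closedBall (b:X) (rr b / 16))
        (fun b => measurableSet_closedBall)
        (fun i j hij => hu_disj i.2 j.2 (Subtype.coe_injective.ne hij))
        (ne_top_of_le_ne_top (hfin z₀ (Rb+2) (by linarith)).ne (measure_mono hubound))
      have huniv : {i : ↥u | ε₀ ≤ μ (closedBall (i:X) (rr i / 16))} = Set.univ :=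
        Set.eq_univ_of_forall hle
      rw [huniv] at hfin2
      exact Set.finite_coe_iff.mp (Set.finite_univ_iff.mp hfin2)
    set uF := hufin.toFinset with huFdef
    have huF_mem : ∀ {b : X}, b ∈ uF ↔ b ∈ u := fun {b} => hufin.mem_toFinset
    -- step 1
    have hstep1 : ∫⁻ x in E, ENNReal.ofReal (g x ^ p) ∂μ ≤
        ∑ b ∈ uF, ∫⁻ x in closedBall b (4*(rr b/16)), ENNReal.ofReal (g x ^ p) ∂μ := by
      refine le_trans (lintegral_mono_set ?_) (lintegral_biUnion_finset_le μ _ uF _)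
      intro a ha
      obtain ⟨b, hb, hsub⟩ := hu_cov a ha
      exact Set.mem_biUnion (huF_mem.mpr hb)
        (hsub (mem_closedBall_self (div_nonneg (hrr0 a ha).le (by norm_num))))
    -- step 2
    have hstep2 : ∀ b ∈ uF, ∫⁻ x in closedBall b (4*(rr b/16)), ENNReal.ofReal (g x ^ p) ∂μ ≤
        ENNReal.ofReal ((2 * g b) ^ p) * (ENNReal.ofReal L)^3 * μ (ball b (rr b/16)) := by
      intro b hb
      have hbE : b ∈ E := huE (huF_mem.mp hb)
      have h0 := hrr0 b hbE
      have hgb : e ≤ g b := hbE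
      have hbound : ∀ x ∈ closedBall b (4*(rr b/16)),
          ENNReal.ofReal (g x ^ p) ≤ ENNReal.ofReal ((2 * g b)^p) := by
        intro x hx
        have hd : dist x b ≤ 4*(rr b/16) := mem_closedBall.mp hx
        have hdδ₂ : dist x b < δ₂ := by
          have h1 := hrrδ b hbE
          linarith [hδpos]
        have hgx : g x ≤ g b + ε₁ := by
          have h7 := hδ₂ hdδ₂
          rw [Real.dist_eq, abs_lt] at h7
          linarith [h7.1]
        have hgb2 : g b + ε₁ ≤ 2 * g b := by
          rw [hε₁def]
          linarith
        exact ENNReal.ofReal_le_ofReal (Real.rpow_le_rpow (hg_nonneg x) (by linarith) hp0.le)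
      calc ∫⁻ x in closedBall b (4*(rr b/16)), ENNReal.ofReal (g x ^ p) ∂μ
          ≤ ∫⁻ _x in closedBall b (4*(rr b/16)), ENNReal.ofReal ((2*g b)^p) ∂μ :=
            setLIntegral_mono measurable_const hbound
        _ = ENNReal.ofReal ((2*g b)^p) * μ (closedBall b (4*(rr b/16))) :=
            setLIntegral_const _ _
        _ ≤ ENNReal.ofReal ((2*g b)^p) * ((ENNReal.ofReal L)^3 * μ (ball b (rr b/16))) := by
            gcongr
            calc μ (closedBall b (4*(rr b/16))) ≤ μ (ball b (8*(rr b/16))) :=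
                measure_mono (closedBall_subset_ball (by linarith))
              _ ≤ (ENNReal.ofReal L)^3 * μ (ball b (rr b/16)) :=
                ball_doubling_pow μ L hdouble b (by positivity) 3 (by
                  have h23 : (2:ℝ)^3 = 8 := by norm_num
                  rw [h23])
        _ = ENNReal.ofReal ((2*g b)^p) * (ENNReal.ofReal L)^3 * μ (ball b (rr b/16)) := by
            ring
    -- step 3
    have hstep3 : ∀ b ∈ uF, ENNReal.ofReal (g b ^ p) ≤
        ENNReal.ofReal (8 ^ p) * ENNReal.ofReal (lam ^ p) *
          ((ENNReal.ofReal L)^7 * μ (ball (yy b) (rr b/16))) := by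
      intro b hb
      have hbE : b ∈ E := huE (huF_mem.mp hb)
      have h0 := hrr0 b hbE
      have hgb : e ≤ g b := hbE
      have hgbpos : 0 < g b := lt_of_lt_of_le hepos hgb
      have h1 : μ (ball b (4 * rr b)) ≤ μ (ball (yy b) (5 * rr b)) := by
        apply measure_mono
        intro z hz
        rw [mem_ball] at *
        have hyb := hyy b hbE
        calc dist z (yy b) ≤ dist z b + dist b (yy b) := dist_triangle _ _ _
          _ < 4*rr b + rr b := add_lt_add hz (by rw [dist_comm]; exact hyb)
          _ = 5*rr b := by ring
      have h2 : μ (ball (yy b) (5 * rr b)) ≤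
          (ENNReal.ofReal L)^7 * μ (ball (yy b) (rr b/16)) :=
        ball_doubling_pow μ L hdouble _ (by positivity) 7 (by
          have h27 : (2:ℝ)^7 = 128 := by norm_num
          rw [h27]
          linarith)
      have h3 : ENNReal.ofReal ((g b/(8*lam))^p) ≤
          (ENNReal.ofReal L)^7 * μ (ball (yy b) (rr b/16)) :=
        le_trans (hrr4 b hbE).le (h1.trans h2)
      have h4 : 8^p * lam^p * (g b/(8*lam))^p = (g b)^p := by
        rw [← Real.mul_rpow (by norm_num) hlampos.le,
          ← Real.mul_rpow (by positivity) (by positivity)]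
        congr 1
        field_simp
      calc ENNReal.ofReal (g b ^ p)
          = ENNReal.ofReal (8^p) * ENNReal.ofReal (lam^p) *
              ENNReal.ofReal ((g b/(8*lam))^p) := by
            rw [← ENNReal.ofReal_mul (by positivity), ← ENNReal.ofReal_mul (by positivity), h4]
        _ ≤ ENNReal.ofReal (8^p) * ENNReal.ofReal (lam^p) *
              ((ENNReal.ofReal L)^7 * μ (ball (yy b) (rr b/16))) := by gcongr
    -- boxes: disjoint subsets of D
    have hboxsub : ∀ b ∈ uF, (ball b (rr b/16)) ×ˢ (ball (yy b) (rr b/16)) ⊆ D := by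
      intro b hb z hz
      have hbE : b ∈ E := huE (huF_mem.mp hb)
      exact hbox b hbE z.1 z.2 (le_of_lt (mem_ball.mp hz.1)) (le_of_lt (mem_ball.mp hz.2))
    have hdisj : Set.PairwiseDisjoint (↑uF : Set X)
        (fun b => (ball b (rr b/16)) ×ˢ (ball (yy b) (rr b/16))) := by
      intro i hi j hj hij
      have hiu : i ∈ u := huF_mem.mp (by simpa using hi)
      have hju : j ∈ u := huF_mem.mp (by simpa using hj)
      have h1 : Disjoint (closedBall i (rr i/16)) (closedBall j (rr j/16)) :=
        hu_disj hiu hju hij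
      rw [Function.onFun]
      apply Set.disjoint_left.mpr
      rintro ⟨a, b'⟩ ⟨ha1, -⟩ ⟨hb1, -⟩
      exact Set.disjoint_left.mp h1 (ball_subset_closedBall ha1)
        (ball_subset_closedBall hb1)
    have hsum_boxes : ∑ b ∈ uF, μ (ball b (rr b/16)) * μ (ball (yy b) (rr b/16)) ≤
        (μ.prod μ) D := by
      have h1 : ∑ b ∈ uF, μ (ball b (rr b/16)) * μ (ball (yy b) (rr b/16)) =
          (μ.prod μ) (⋃ b ∈ uF, (ball b (rr b/16)) ×ˢ (ball (yy b) (rr b/16))) := by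
        rw [measure_biUnion_finset hdisj
          (fun b _ => measurableSet_ball.prod measurableSet_ball)]
        apply Finset.sum_congr rfl
        intro b _
        rw [Measure.prod_prod]
      rw [h1]
      exact measure_mono (Set.iUnion₂_subset hboxsub)
    -- combine the per-ball estimates
    have h16 : ENNReal.ofReal (2^p) * ENNReal.ofReal (8^p) = ENNReal.ofReal (16^p) := by
      rw [← ENNReal.ofReal_mul (by positivity), ← Real.mul_rpow (by norm_num) (by norm_num)]
      norm_num
    have hperb : ∀ b ∈ uF, ∫⁻ x in closedBall b (4*(rr b/16)), ENNReal.ofReal (g x ^ p) ∂μ ≤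
        ENNReal.ofReal (16^p) * (ENNReal.ofReal L)^10 * ENNReal.ofReal (lam^p) *
          (μ (ball b (rr b/16)) * μ (ball (yy b) (rr b/16))) := by
      intro b hb
      refine (hstep2 b hb).trans ?_
      have h2p : ENNReal.ofReal ((2*g b)^p) = ENNReal.ofReal (2^p) * ENNReal.ofReal (g b ^ p) := by
        rw [← ENNReal.ofReal_mul (by positivity), ← Real.mul_rpow (by norm_num) (hg_nonneg b)]
      calc ENNReal.ofReal ((2*g b)^p) * (ENNReal.ofReal L)^3 * μ (ball b (rr b/16))
          = ENNReal.ofReal (2^p) * ENNReal.ofReal (g b^p) * (ENNReal.ofReal L)^3 *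
              μ (ball b (rr b/16)) := by rw [h2p]
        _ ≤ ENNReal.ofReal (2^p) * (ENNReal.ofReal (8^p) * ENNReal.ofReal (lam^p) *
              ((ENNReal.ofReal L)^7 * μ (ball (yy b) (rr b/16)))) * (ENNReal.ofReal L)^3 *
              μ (ball b (rr b/16)) := by
            gcongr
            exact hstep3 b hb
        _ = (ENNReal.ofReal (2^p) * ENNReal.ofReal (8^p)) * (ENNReal.ofReal L)^10 *
              ENNReal.ofReal (lam^p) *
              (μ (ball b (rr b/16)) * μ (ball (yy b) (rr b/16))) := by ring
        _ = ENNReal.ofReal (16^p) * (ENNReal.ofReal L)^10 * ENNReal.ofReal (lam^p) *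
              (μ (ball b (rr b/16)) * μ (ball (yy b) (rr b/16))) := by rw [h16]
    have htotal : I ≤ 2 * (ENNReal.ofReal (16^p) * (ENNReal.ofReal L)^10 *
        ENNReal.ofReal (lam^p) * (μ.prod μ) D) := by
      have h1 : I / 2 ≤ ENNReal.ofReal (16^p) * (ENNReal.ofReal L)^10 *
          ENNReal.ofReal (lam^p) * (μ.prod μ) D := by
        calc I / 2 ≤ ∫⁻ x in E, ENNReal.ofReal (g x^p) ∂μ := hEint
          _ ≤ ∑ b ∈ uF, ∫⁻ x in closedBall b (4*(rr b/16)), ENNReal.ofReal (g x ^ p) ∂μ :=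
              hstep1
          _ ≤ ∑ b ∈ uF, ENNReal.ofReal (16^p) * (ENNReal.ofReal L)^10 *
                ENNReal.ofReal (lam^p) *
                (μ (ball b (rr b/16)) * μ (ball (yy b) (rr b/16))) :=
              Finset.sum_le_sum hperb
          _ = ENNReal.ofReal (16^p) * (ENNReal.ofReal L)^10 * ENNReal.ofReal (lam^p) *
                ∑ b ∈ uF, μ (ball b (rr b/16)) * μ (ball (yy b) (rr b/16)) := by
              rw [← Finset.mul_sum]
          _ ≤ ENNReal.ofReal (16^p) * (ENNReal.ofReal L)^10 * ENNReal.ofReal (lam^p) *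
                (μ.prod μ) D := by gcongr
      calc I = 2 * (I / 2) := (ENNReal.mul_div_cancel two_ne_zero ENNReal.ofNat_ne_top).symm
        _ ≤ _ := by gcongr
    have hCone : ENNReal.ofReal C * 2 * ENNReal.ofReal (16^p) * (ENNReal.ofReal L)^10 = 1 := by
      have hL10 : (ENNReal.ofReal L)^10 = ENNReal.ofReal (L^10) :=
        (ENNReal.ofReal_pow hL0.le 10).symm
      have h2 : (2:ℝ≥0∞) = ENNReal.ofReal 2 := by norm_num
      rw [hL10, h2, ← ENNReal.ofReal_mul (by positivity), ← ENNReal.ofReal_mul (by positivity),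
        ← ENNReal.ofReal_mul (by positivity)]
      have ha : (2 * 16^p * L^10 : ℝ) ≠ 0 := by positivity
      have hb : C * 2 * 16^p * L^10 = 1 := by
        rw [hCdef]
        field_simp
      rw [hb, ENNReal.ofReal_one]
    calc ENNReal.ofReal C * I
        ≤ ENNReal.ofReal C * (2 * (ENNReal.ofReal (16^p) * (ENNReal.ofReal L)^10 *
            ENNReal.ofReal (lam^p) * (μ.prod μ) D)) := by gcongr
      _ = (ENNReal.ofReal C * 2 * ENNReal.ofReal (16^p) * (ENNReal.ofReal L)^10) *
            (ENNReal.ofReal (lam^p) * (μ.prod μ) D) := by ring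
      _ = ENNReal.ofReal (lam^p) * (μ.prod μ) D := by rw [hCone, one_mul]
  exact Filter.le_liminf_of_le (by isBoundedDefault)
    (Filter.eventually_atTop.mpr ⟨lam₀, hmain⟩)
end
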